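/- arXiv:math/0411027 — 3 statements merged into one kernel-verified Lean document; each statement's English description precedes it below -/
import Mathlib

section
/- In the group G = ⟨a, b | [a,b] = 1⟩ ≅ ℤ × ℤ with H = ⟨a⟩ and relative generating set X = {b^{±1}}, the word Wₙ = [aⁿ, b] = a⁻ⁿb⁻¹aⁿb has length 4 as a word over X ∪ (H \ {1}) for every n ≥ 1, yet Wₙ represents the identity in G and every expression of Wₙ as a product of conjugates of the relator [a,b]^{±1} in the free product ⟨a⟩ ∗ F(b) requires at least n factors. Hence the relative Dehn function of ℤ² with respect to ⟨a⟩ and X = {b^{±1}} (with relator set {[a,b]}) is not well-defined. -/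
/-- The area of `w` with respect to the relator set `R`: the least `k` such that
`w` is a product of `k` conjugates of elements of `R^{±1}`. -/
noncomputable def relArea {F : Type*} [Group F] (R : Set F) (w : F) : ℕ :=
  sInf {k | ∃ l : List F, l.length = k ∧
    (∀ x ∈ l, ∃ f r : F, (r ∈ R ∨ r⁻¹ ∈ R) ∧ x = f⁻¹ * r * f) ∧ l.prod = w}

/-- The free product `F = ⟨a⟩ ∗ F(b) ≅ ℤ ∗ ℤ`. -/
abbrev F2 : Type := FreeGroup Bool

/-- The generator `a` (generating the subgroup `H`). -/
def fa : F2 := FreeGroup.of true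

/-- The generator `b` (the relative generating set is `X = {b^{±1}}`). -/
def fb : F2 := FreeGroup.of false

/-- The alphabet `X ∪ (H \ {1})`: the letters `b^{±1}` together with `a^k`, `k ≠ 0`. -/
def relAlphabet : Set F2 :=
  {x | x = fb ∨ x = fb⁻¹ ∨ ∃ k : ℤ, k ≠ 0 ∧ x = fa ^ k}

/-!
Map `F` onto the integer Heisenberg group by `a ↦ x`, `b ↦ y`. The relator `[a,b]` goes to
the central element `z` of infinite order, so each conjugate of `[a,b]^{±1}` goes to `z^{±1}`,
whereas `[aⁿ, b]` goes to `zⁿ`: at least `n` conjugates are needed. Since `[aⁿ, b]` is a word of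
length `4` over `{b^{±1}} ∪ (H \ {1})` for every `n ≥ 1`, no function of the length bounds the area.
-/

open scoped commutatorElement

section RelatorConjugates

variable {G : Type*} [Group G] {R : Set G}

variable (R) in
def IsRelatorConj (x : G) : Prop :=
  ∃ f r : G, (r ∈ R ∨ r⁻¹ ∈ R) ∧ x = f⁻¹ * r * f

lemma IsRelatorConj.conj {x : G} (hx : IsRelatorConj R x) (g : G) :
    IsRelatorConj R (g * x * g⁻¹) := by
  obtain ⟨f, r, hr, rfl⟩ := hx
  exact ⟨f * g⁻¹, r, hr, by group⟩

lemma IsRelatorConj.mem_normalClosure {x : G} (hx : IsRelatorConj R x) :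
    x ∈ Subgroup.normalClosure R := by
  obtain ⟨f, r, hr, rfl⟩ := hx
  have hr : r ∈ Subgroup.normalClosure R := by
    rcases hr with hr | hr
    · exact Subgroup.subset_normalClosure hr
    · simpa using inv_mem (Subgroup.subset_normalClosure hr : r⁻¹ ∈ Subgroup.normalClosure R)
  simpa using Subgroup.normalClosure_normal.conj_mem r hr f⁻¹

lemma list_prod_mem_normalClosure {l : List G} (hl : ∀ x ∈ l, IsRelatorConj R x) :
    l.prod ∈ Subgroup.normalClosure R :=
  list_prod_mem fun x hx => (hl x hx).mem_normalClosure

lemma relArea_list_prod_le_length {l : List G} (hl : ∀ x ∈ l, IsRelatorConj R x) :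
    relArea R l.prod ≤ l.length :=
  Nat.sInf_le ⟨l, rfl, hl, rfl⟩

lemma le_relArea {w : G} {n : ℕ}
    (hw : ∃ l : List G, (∀ x ∈ l, IsRelatorConj R x) ∧ l.prod = w)
    (h : ∀ l : List G, (∀ x ∈ l, IsRelatorConj R x) → l.prod = w → n ≤ l.length) :
    n ≤ relArea R w := by
  obtain ⟨l, hl, hprod⟩ := hw
  refine le_csInf ⟨_, l, rfl, hl, hprod⟩ ?_
  rintro k ⟨l', rfl, hl', hprod'⟩
  exact h l' hl' hprod'

lemma exists_isRelatorConj_list_prod_eq_commutator_pow {g h : G} (hR : ⁅g, h⁆ ∈ R) (n : ℕ) :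
    ∃ l : List G, l.length = n ∧ (∀ x ∈ l, IsRelatorConj R x) ∧ l.prod = ⁅g ^ n, h⁆ := by
  induction n with
  | zero => exact ⟨[], rfl, by simp, by simp⟩
  | succ n ih =>
    obtain ⟨l, hlen, hl, hprod⟩ := ih
    refine ⟨l.map (MulAut.conj g) ++ [⁅g, h⁆], by simp [hlen], ?_, ?_⟩
    · simp only [List.mem_append, List.mem_map, List.mem_singleton]
      rintro x (⟨y, hy, rfl⟩ | rfl)
      · exact (hl y hy).conj g
      · exact ⟨1, _, Or.inl hR, by group⟩
    · rw [List.prod_append, ← map_list_prod, hprod, List.prod_singleton, MulAut.conj_apply]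
      simp only [commutatorElement_def, pow_succ']
      group

lemma commutator_pow_mem_normalClosure (g h : G) (n : ℕ) :
    ⁅g ^ n, h⁆ ∈ Subgroup.normalClosure {⁅g, h⁆} := by
  obtain ⟨l, -, hl, hprod⟩ :=
    exists_isRelatorConj_list_prod_eq_commutator_pow (Set.mem_singleton ⁅g, h⁆) n
  exact hprod ▸ list_prod_mem_normalClosure hl

variable {K : Type*} [Group K] {φ : G →* K} {c : K}

lemma exists_map_list_prod_eq_zpow (hc : c ∈ Subgroup.center K) (hR : ∀ r ∈ R, φ r = c)
    {l : List G} (hl : ∀ x ∈ l, IsRelatorConj R x) :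
    ∃ m : ℤ, φ l.prod = c ^ m ∧ m.natAbs ≤ l.length := by
  induction l with
  | nil => exact ⟨0, by simp, le_rfl⟩
  | cons x l ih =>
    obtain ⟨m, hm, hle⟩ := ih fun y hy => hl y (List.mem_cons_of_mem x hy)
    have hconj (f : K) (e : ℤ) : f⁻¹ * c ^ e * f = c ^ e := by
      rw [mul_assoc, ← Subgroup.mem_center_iff.mp (Subgroup.zpow_mem _ hc e) f,
        inv_mul_cancel_left]
    obtain ⟨e, he, hx⟩ : ∃ e : ℤ, e.natAbs = 1 ∧ φ x = c ^ e := by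
      obtain ⟨f, r, hr | hr, rfl⟩ := hl x List.mem_cons_self
      · exact ⟨1, rfl, by simpa [hR r hr] using hconj (φ f) 1⟩
      · have hr : φ r = c⁻¹ := by rw [← inv_inv r, map_inv, hR _ hr]
        exact ⟨-1, rfl, by simpa [hr] using hconj (φ f) (-1)⟩
    refine ⟨e + m, by rw [List.prod_cons, map_mul, hx, hm, zpow_add], ?_⟩
    simp only [List.length_cons]
    omega

lemma natAbs_le_length_of_map_list_prod_eq_zpow (hc : c ∈ Subgroup.center K)
    (hc_inf : ¬IsOfFinOrder c) (hR : ∀ r ∈ R, φ r = c) {l : List G}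
    (hl : ∀ x ∈ l, IsRelatorConj R x) {n : ℤ} (hn : φ l.prod = c ^ n) :
    n.natAbs ≤ l.length := by
  obtain ⟨m, hm, hle⟩ := exists_map_list_prod_eq_zpow hc hR hl
  rwa [injective_zpow_iff_not_isOfFinOrder.mpr hc_inf (hn.symm.trans hm)]

end RelatorConjugates

/-- The integer Heisenberg group, with `⟨x, y, z⟩` standing for the unitriangular matrix
`[[1, x, z], [0, 1, y], [0, 0, 1]]`. -/
@[ext] structure Heis where
  x : ℤ
  y : ℤ
  z : ℤ

namespace Heis

instance : Mul Heis := ⟨fun p q => ⟨p.x + q.x, p.y + q.y, p.z + q.z + p.x * q.y⟩⟩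
instance : One Heis := ⟨⟨0, 0, 0⟩⟩
instance : Inv Heis := ⟨fun p => ⟨-p.x, -p.y, -p.z + p.x * p.y⟩⟩

lemma mul_def (p q : Heis) : p * q = ⟨p.x + q.x, p.y + q.y, p.z + q.z + p.x * q.y⟩ := rfl
lemma one_def : (1 : Heis) = ⟨0, 0, 0⟩ := rfl
lemma inv_def (p : Heis) : p⁻¹ = ⟨-p.x, -p.y, -p.z + p.x * p.y⟩ := rfl

instance : Group Heis where
  mul_assoc p q r := by ext <;> simp only [mul_def] <;> ring
  one_mul p := by ext <;> simp [mul_def, one_def]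
  mul_one p := by ext <;> simp [mul_def, one_def]
  inv_mul_cancel p := by ext <;> simp [mul_def, inv_def, one_def]

def X : Heis := ⟨1, 0, 0⟩
def Y : Heis := ⟨0, 1, 0⟩
def Z : Heis := ⟨0, 0, 1⟩

lemma mk_zero_pow (a c : ℤ) (n : ℕ) : (⟨a, 0, c⟩ : Heis) ^ n = ⟨n * a, 0, n * c⟩ := by
  induction n with
  | zero => simp [one_def]
  | succ n ih => rw [pow_succ, ih]; ext <;> simp only [mul_def] <;> push_cast <;> ring

lemma commutator_X_pow_Y (n : ℕ) : ⁅X ^ n, Y⁆ = Z ^ n := by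
  simp only [X, Z, mk_zero_pow]
  ext <;> simp [commutatorElement_def, mul_def, inv_def, Y]

lemma Z_mem_center : Z ∈ Subgroup.center Heis :=
  Subgroup.mem_center_iff.mpr fun p => by ext <;> simp [mul_def, Z, add_comm]

lemma not_isOfFinOrder_Z : ¬IsOfFinOrder Z := by
  rw [isOfFinOrder_iff_pow_eq_one]
  rintro ⟨n, hn, h⟩
  have := congrArg Heis.z h
  simp only [Z, mk_zero_pow, one_def, mul_one] at this
  omega

end Heis

def toHeis : F2 →* Heis := FreeGroup.lift fun t => if t then Heis.X else Heis.Y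

lemma toHeis_commutator_pow (n : ℕ) : toHeis ⁅fa ^ n, fb⁆ = Heis.Z ^ n := by
  rw [map_commutatorElement, map_pow, ← Heis.commutator_X_pow_Y]
  rfl

lemma relArea_commutator_pow (n : ℕ) : relArea {⁅fa, fb⁆} ⁅fa ^ n, fb⁆ = n := by
  obtain ⟨l, hlen, hl, hprod⟩ :=
    exists_isRelatorConj_list_prod_eq_commutator_pow (Set.mem_singleton ⁅fa, fb⁆) n
  refine le_antisymm ?_ (le_relArea ⟨l, hl, hprod⟩ fun l' hl' hprod' => ?_)
  · rw [← hprod, ← hlen]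
    exact relArea_list_prod_le_length hl
  have hR : ∀ r ∈ ({⁅fa, fb⁆} : Set F2), toHeis r = Heis.Z := by
    rintro r rfl
    simpa using toHeis_commutator_pow 1
  simpa using natAbs_le_length_of_map_list_prod_eq_zpow Heis.Z_mem_center
    Heis.not_isOfFinOrder_Z hR hl' (n := n) (by rw [hprod', toHeis_commutator_pow, zpow_natCast])

def commutatorWord (n : ℤ) : List F2 := [fa ^ n, fb, fa ^ (-n), fb⁻¹]

lemma commutatorWord_mem_relAlphabet {n : ℤ} (hn : n ≠ 0) :
    ∀ x ∈ commutatorWord n, x ∈ relAlphabet := by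
  simp only [commutatorWord, List.forall_mem_cons, List.not_mem_nil, IsEmpty.forall_iff,
    implies_true, and_true]
  exact ⟨.inr (.inr ⟨n, hn, rfl⟩), .inl rfl, .inr (.inr ⟨-n, neg_ne_zero.mpr hn, rfl⟩),
    .inr (.inl rfl)⟩

lemma commutatorWord_prod (n : ℕ) : (commutatorWord n).prod = ⁅fa ^ n, fb⁆ := by
  simp [commutatorWord, commutatorElement_def, zpow_neg, mul_assoc]

theorem relative_dehn_function_not_well_defined :
    (∀ n : ℕ, 1 ≤ n →
      ∃ W : List F2, W.length = 4 ∧ (∀ x ∈ W, x ∈ relAlphabet) ∧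
        W.prod = ⁅fa ^ n, fb⁆ ∧
        ⁅fa ^ n, fb⁆ ∈ Subgroup.normalClosure {⁅fa, fb⁆} ∧
        n ≤ relArea {⁅fa, fb⁆} ⁅fa ^ n, fb⁆) ∧
    ¬ ∃ D : ℕ → ℕ, ∀ W : List F2, (∀ x ∈ W, x ∈ relAlphabet) →
        W.prod ∈ Subgroup.normalClosure {⁅fa, fb⁆} →
        relArea {⁅fa, fb⁆} W.prod ≤ D W.length := by
  refine ⟨fun n hn => ⟨commutatorWord n, rfl, commutatorWord_mem_relAlphabet (by omega),
    commutatorWord_prod n, commutator_pow_mem_normalClosure fa fb n,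
    (relArea_commutator_pow n).ge⟩, ?_⟩
  rintro ⟨D, hD⟩
  have harea := hD (commutatorWord (D 4 + 1 : ℕ)) (commutatorWord_mem_relAlphabet (by omega))
    (by rw [commutatorWord_prod]; exact commutator_pow_mem_normalClosure fa fb _)
  rw [commutatorWord_prod, relArea_commutator_pow] at harea
  exact Nat.not_succ_le_self _ harea
end

section
/- In ℤ × ℤ = ⟨a,b⟩, for each n ≥ 1 the commutator [aⁿ, b] is trivial, and in the free product F = ⟨a⟩ ∗ F(b), the element [aⁿ, b] lies in the normal closure N of [a, b] and its image in N/[N, F] (equivalently, the minimal number of conjugates of [a,b]^{±1} whose product equals [aⁿ,b] in F) grows linearly: it is exactly n. -/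
/-- The homomorphism onto `ℤ × ℤ` sending `a ↦ (1,0)`, `b ↦ (0,1)`. -/
def abMap : F2 →* Multiplicative (ℤ × ℤ) :=
  FreeGroup.lift fun x => Multiplicative.ofAdd (if x then ((1, 0) : ℤ × ℤ) else (0, 1))

open scoped commutatorElement

/-!
The free group acts on the group ring `ℤ[ℤ²]` by affine maps: `a` by multiplication with
`t = abMap a`, and `b` by `x ↦ s x + 1` with `s = abMap b`. The translation part `δ w = w • 0`
(the Fox derivative `∂w/∂b` read in `ℤ[ℤ²]`) is a crossed homomorphism over `abMap`, so
`δ [aⁿ, b] = tⁿ - 1` and a conjugate `f⁻¹ [a, b]^{±1} f` has `δ = ±m (t - 1)` for a monomial `m`.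
If `[aⁿ, b]` is a product of `k` such conjugates then, `ℤ[ℤ²]` being a domain,
`1 + t + ⋯ + tⁿ⁻¹` is a signed sum of `k` monomials; it has `n` distinct monomials, so `k ≥ n`.
Conversely `[aⁿ⁺¹, b] = aⁿ [a, b] a⁻ⁿ · [aⁿ, b]` writes `[aⁿ, b]` with `n` conjugates.
-/

open scoped MonoidAlgebra

section ProdOfConjugates

variable {F : Type*} [Group F]

def IsProdOfConjugates (R : Set F) (k : ℕ) (w : F) : Prop :=
  ∃ l : List F, l.length = k ∧
    (∀ x ∈ l, ∃ f r : F, (r ∈ R ∨ r⁻¹ ∈ R) ∧ x = f⁻¹ * r * f) ∧ l.prod = w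

variable {R : Set F} {k : ℕ} {w : F}

theorem isProdOfConjugates_zero_one (R : Set F) : IsProdOfConjugates R 0 1 :=
  ⟨[], rfl, by simp, rfl⟩

theorem IsProdOfConjugates.conj_mul (h : IsProdOfConjugates R k w) {r : F} (hr : r ∈ R)
    (f : F) : IsProdOfConjugates R (k + 1) (f⁻¹ * r * f * w) := by
  obtain ⟨l, rfl, hl, rfl⟩ := h
  refine ⟨(f⁻¹ * r * f) :: l, rfl, ?_, rfl⟩
  rintro x (_ | ⟨_, hx⟩)
  exacts [⟨f, r, .inl hr, rfl⟩, hl x hx]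

theorem IsProdOfConjugates.mem_normalClosure (h : IsProdOfConjugates R k w) :
    w ∈ Subgroup.normalClosure R := by
  obtain ⟨l, -, hl, rfl⟩ := h
  refine Subgroup.list_prod_mem _ fun x hx => ?_
  obtain ⟨f, r, hr, rfl⟩ := hl x hx
  have hr' : r ∈ Subgroup.normalClosure R := by
    rcases hr with hr | hr
    · exact Subgroup.subset_normalClosure hr
    · simpa using Subgroup.subset_normalClosure hr
  simpa using Subgroup.normalClosure_normal.conj_mem r hr' f⁻¹

theorem isProdOfConjugates_commutatorElement_pow (g h : F) (n : ℕ) :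
    IsProdOfConjugates {⁅g, h⁆} n ⁅g ^ n, h⁆ := by
  induction n with
  | zero => simpa using isProdOfConjugates_zero_one {⁅g, h⁆}
  | succ n ih =>
    convert ih.conj_mul rfl (g ^ n)⁻¹ using 1
    simp only [commutatorElement_def, pow_succ]
    group

end ProdOfConjugates

section AffineAction

variable {G R : Type*} [Group G]

section Ring

variable [Ring R] {ρ : G →* Equiv.Perm R} {π : G →* Rˣ}

theorem apply_mul_zero_of_affine (hρ : ∀ g x, ρ g x = π g * x + ρ g 0) (g h : G) :
    ρ (g * h) 0 = π g * ρ h 0 + ρ g 0 := by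
  rw [map_mul, Equiv.Perm.mul_apply, hρ g]

theorem apply_inv_zero_of_affine (hρ : ∀ g x, ρ g x = π g * x + ρ g 0) (g : G) :
    ρ g⁻¹ 0 = -(↑(π g)⁻¹ * ρ g 0) := by
  have h := apply_mul_zero_of_affine hρ g⁻¹ g
  rw [inv_mul_cancel, map_one, Equiv.Perm.one_apply, map_inv] at h
  exact eq_neg_of_add_eq_zero_right h.symm

theorem apply_conj_zero_of_affine (hρ : ∀ g x, ρ g x = π g * x + ρ g 0) {r : G}
    (hr : π r = 1) (f : G) : ρ (f⁻¹ * r * f) 0 = ↑(π f)⁻¹ * ρ r 0 := by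
  rw [apply_mul_zero_of_affine hρ, apply_mul_zero_of_affine hρ, apply_inv_zero_of_affine hρ,
    map_mul, hr, mul_one, map_inv]
  abel

theorem exists_sum_of_isProdOfConjugates (hρ : ∀ g x, ρ g x = π g * x + ρ g 0) {r w : G}
    {k : ℕ} (hr : π r = 1) (hw : IsProdOfConjugates {r} k w) :
    ∃ l : List R, l.length = k ∧ (∀ c ∈ l, ∃ f, c = π f ∨ c = -π f) ∧
      ρ w 0 = l.sum * ρ r 0 := by
  have hsign : ∀ s : G, s ∈ ({r} : Set G) ∨ s⁻¹ ∈ ({r} : Set G) →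
      π s = 1 ∧ ∃ ε : R, (ε = 1 ∨ ε = -1) ∧ ρ s 0 = ε * ρ r 0 := by
    rintro s (rfl | hs)
    · exact ⟨hr, 1, .inl rfl, (one_mul _).symm⟩
    · obtain rfl := inv_eq_iff_eq_inv.mp hs
      exact ⟨by simp [hr], -1, .inr rfl, by rw [apply_inv_zero_of_affine hρ, hr]; simp⟩
  obtain ⟨l, rfl, hl, rfl⟩ := hw
  induction l with
  | nil => exact ⟨[], rfl, by simp, by simp⟩
  | cons x l ih =>
    obtain ⟨q, hq, hqπ, hqρ⟩ := ih fun y hy => hl y (.tail _ hy)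
    obtain ⟨f, s, hs, rfl⟩ := hl x (.head _)
    obtain ⟨hπs, ε, hε, hρs⟩ := hsign s hs
    refine ⟨↑(π f)⁻¹ * ε :: q, by simp [hq], ?_, ?_⟩
    · rintro c (_ | ⟨_, hc⟩)
      · rcases hε with rfl | rfl
        exacts [⟨f⁻¹, .inl (by simp)⟩, ⟨f⁻¹, .inr (by simp)⟩]
      · exact hqπ c hc
    · rw [List.prod_cons, apply_mul_zero_of_affine hρ, apply_conj_zero_of_affine hρ hπs, hqρ, hρs]
      simp [hπs, add_mul, mul_assoc, add_comm]

end Ring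

theorem apply_commutatorElement_zero_of_affine [CommRing R]
    {ρ : G →* Equiv.Perm R} {π : G →* Rˣ} (hρ : ∀ g x, ρ g x = π g * x + ρ g 0) (g h : G) :
    ρ ⁅g, h⁆ 0 = (1 - π h) * ρ g 0 + (π g - 1) * ρ h 0 := by
  rw [commutatorElement_def, apply_mul_zero_of_affine hρ, apply_mul_zero_of_affine hρ,
    apply_mul_zero_of_affine hρ, apply_inv_zero_of_affine hρ, apply_inv_zero_of_affine hρ]
  simp only [map_mul, map_inv, Units.val_mul]
  linear_combination (-(↑(π h) * ↑(π h)⁻¹ * ρ h 0) - ↑(π h) * ρ g 0) * (π g).mul_inv +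
    (-ρ h 0) * (π h).mul_inv

end AffineAction

section FreeAffine

variable {X R : Type*} [Ring R]

def freeAffine (π : FreeGroup X →* Rˣ) (d : X → R) : FreeGroup X →* Equiv.Perm R :=
  FreeGroup.lift fun i => Equiv.addRight (d i) * Units.mulLeft (π (.of i))

theorem freeAffine_apply (π : FreeGroup X →* Rˣ) (d : X → R) (w : FreeGroup X) (x : R) :
    freeAffine π d w x = π w * x + freeAffine π d w 0 := by
  induction w using FreeGroup.induction_on generalizing x with
  | C1 => simp
  | of i => simp [freeAffine]
  | inv_of i _ => simp [freeAffine, mul_add]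
  | mul v w hv hw =>
    rw [map_mul, Equiv.Perm.mul_apply, Equiv.Perm.mul_apply, hw, hv, hv (freeAffine π d w 0),
      map_mul, Units.val_mul, mul_add, mul_assoc, add_assoc]

end FreeAffine

section MonoidAlgebra

variable {k M : Type*} [Semiring k]

theorem card_support_coeff_list_sum_le (l : List k[M]) (hl : ∀ c ∈ l, c.coeff.support.card ≤ 1) :
    l.sum.coeff.support.card ≤ l.length := by
  classical
  induction l with
  | nil => simp
  | cons c l ih =>
    calc (c + l.sum).coeff.support.card
        ≤ c.coeff.support.card + l.sum.coeff.support.card :=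
          (Finset.card_le_card Finsupp.support_add).trans (Finset.card_union_le _ _)
      _ ≤ 1 + l.length := add_le_add (hl c (.head _)) (ih fun d hd => hl d (.tail _ hd))
      _ = (c :: l).length := by simp [add_comm]

theorem card_support_coeff_geom_sum [Nontrivial k] [Monoid M] {a : M}
    (ha : Function.Injective (a ^ · : ℕ → M)) (n : ℕ) :
    (∑ j ∈ Finset.range n, MonoidAlgebra.of k M a ^ j).coeff.support.card = n := by
  classical
  simp only [MonoidAlgebra.of_apply, MonoidAlgebra.single_pow, one_pow, MonoidAlgebra.coeff_sum]
  rw [Finsupp.support_sum_eq_biUnion _ fun i j hij => by simpa using ha.ne hij]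
  simp [Finset.biUnion_singleton, Finset.card_image_of_injective _ ha]

end MonoidAlgebra

theorem abMap_commutatorElement (g h : F2) : abMap ⁅g, h⁆ = 1 := by
  rw [map_commutatorElement, commutatorElement_eq_one_iff_mul_comm, mul_comm]

theorem injective_abMap_fa_pow : Function.Injective (abMap fa ^ · : ℕ → _) := by
  intro i j h
  simpa [abMap, fa] using congrArg (fun x => (Multiplicative.toAdd x).1) h

noncomputable def abUnit : F2 →* ℤ[Multiplicative (ℤ × ℤ)]ˣ :=
  (Units.map (MonoidAlgebra.of ℤ _)).comp ((toUnits : _ ≃* _).toMonoidHom.comp abMap)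

theorem coe_abUnit (w : F2) : (abUnit w : ℤ[Multiplicative (ℤ × ℤ)]) = .of ℤ _ (abMap w) := rfl

noncomputable def foxAction : F2 →* Equiv.Perm ℤ[Multiplicative (ℤ × ℤ)] :=
  freeAffine abUnit fun i => if i then 0 else 1

theorem abUnit_commutatorElement (g h : F2) : abUnit ⁅g, h⁆ = 1 := by
  simp only [abUnit, MonoidHom.comp_apply, abMap_commutatorElement, map_one]

theorem foxAction_apply (w : F2) (x : ℤ[Multiplicative (ℤ × ℤ)]) :
    foxAction w x = abUnit w * x + foxAction w 0 :=
  freeAffine_apply _ _ w x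

theorem foxAction_commutatorElement_pow (n : ℕ) :
    foxAction ⁅fa ^ n, fb⁆ 0 = .of ℤ _ (abMap fa) ^ n - 1 := by
  have hfa : foxAction fa 0 = 0 := by simp [foxAction, freeAffine, fa]
  rw [apply_commutatorElement_zero_of_affine foxAction_apply, map_pow,
    Equiv.Perm.pow_apply_eq_self_of_apply_eq_self hfa]
  simp [foxAction, freeAffine, fb, coe_abUnit]

theorem le_of_isProdOfConjugates_commutatorElement_pow {n k : ℕ}
    (h : IsProdOfConjugates {⁅fa, fb⁆} k ⁅fa ^ n, fb⁆) : n ≤ k := by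
  set t : ℤ[Multiplicative (ℤ × ℤ)] := .of ℤ _ (abMap fa)
  obtain ⟨l, rfl, hl, hfox⟩ :=
    exists_sum_of_isProdOfConjugates foxAction_apply (abUnit_commutatorElement fa fb) h
  have hfox1 := foxAction_commutatorElement_pow 1
  rw [pow_one, pow_one] at hfox1
  rw [foxAction_commutatorElement_pow, hfox1] at hfox
  have ht : t - 1 ≠ 0 := by
    refine sub_ne_zero.mpr fun h => one_ne_zero (injective_abMap_fa_pow ?_)
    simpa using MonoidAlgebra.of_injective (h.trans (map_one _).symm)
  have hsum : l.sum = ∑ j ∈ Finset.range n, t ^ j := by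
    refine mul_right_cancel₀ ht ?_
    rw [← hfox, geom_sum_mul]
  calc n = (∑ j ∈ Finset.range n, t ^ j).coeff.support.card :=
        (card_support_coeff_geom_sum injective_abMap_fa_pow n).symm
    _ ≤ l.length := hsum ▸ card_support_coeff_list_sum_le l fun c hc => by
      obtain ⟨f, rfl | rfl⟩ := hl c hc <;> simp [coe_abUnit]

theorem area_of_commutator_power_general (n : ℕ) :
    abMap ⁅fa ^ n, fb⁆ = 1 ∧
    ⁅fa ^ n, fb⁆ ∈ Subgroup.normalClosure {⁅fa, fb⁆} ∧
    relArea {⁅fa, fb⁆} ⁅fa ^ n, fb⁆ = n := by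
  have h := isProdOfConjugates_commutatorElement_pow fa fb n
  exact ⟨abMap_commutatorElement _ _, h.mem_normalClosure,
    IsLeast.csInf_eq ⟨h, fun _ => le_of_isProdOfConjugates_commutatorElement_pow⟩⟩

theorem area_of_commutator_power (n : ℕ) (hn : 1 ≤ n) :
    abMap ⁅fa ^ n, fb⁆ = 1 ∧
    ⁅fa ^ n, fb⁆ ∈ Subgroup.normalClosure {⁅fa, fb⁆} ∧
    relArea {⁅fa, fb⁆} ⁅fa ^ n, fb⁆ = n :=
  area_of_commutator_power_general n
end

section
/- Let A and B be groups, K ≤ A a subgroup, and ξ : K → B a monomorphism. Then the amalgamated product A ∗_{K = ξ(K)} B is isomorphic to a retract of the HNN-extension G = ⟨A ∗ B, t | t⁻¹kt = ξ(k), k ∈ K⟩ of the free product A ∗ B with associated subgroups K ≤ A and ξ(K) ≤ B; specifically, the subgroup of G generated by A ∪ t⁻¹Bt is isomorphic to A ∗_{K = ξ(K)} B and is the image of a retraction of G. -/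
open Monoid Coprod

theorem amalgam_is_retract_of_hnn {A B : Type*} [Group A] [Group B]
    (K : Subgroup A) (ξ : ↥K →* B) (hξ : Function.Injective ξ)
    (φ : ↥(K.map (Coprod.inl : A →* A ∗ B)) ≃* ↥(ξ.range.map (Coprod.inr : B →* A ∗ B)))
    (hφ : ∀ k : ↥K,
      (φ ⟨Coprod.inl (k : A), Subgroup.mem_map.2 ⟨(k : A), k.2, rfl⟩⟩ : A ∗ B) =
        Coprod.inr (ξ k)) :
    -- `G` is the HNN-extension of the free product `A ∗ B` with associated
    -- subgroups `K ≤ A` and `ξ(K) ≤ B`.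
    let G := HNNExtension (A ∗ B) (K.map Coprod.inl) (ξ.range.map Coprod.inr) φ
    -- `S` is the subgroup of `G` generated by `A ∪ t⁻¹Bt`.
    let S : Subgroup G := Subgroup.closure
      ((Set.range fun a : A => HNNExtension.of (Coprod.inl a)) ∪
        (Set.range fun b : B =>
          HNNExtension.t⁻¹ * HNNExtension.of (Coprod.inr b) * HNNExtension.t))
    -- `S` is a retract of `G` and is isomorphic to the amalgamated product
    -- `A ∗_{K = ξ(K)} B`.
    (∃ r : G →* G, (∀ s ∈ S, r s = s) ∧ r.range = S) ∧
    Nonempty (↥S ≃*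
      (A ∗ B) ⧸ Subgroup.normalClosure
        {x : A ∗ B | ∃ k : ↥K, x = (Coprod.inl (k : A))⁻¹ * Coprod.inr (ξ k)}) := by
  intro G S
  set N : Subgroup (A ∗ B) := Subgroup.normalClosure
      {x : A ∗ B | ∃ k : ↥K, x = (Coprod.inl (k : A))⁻¹ * Coprod.inr (ξ k)} with hN
  -- Key relation in `G` : `t⁻¹ (inr (ξ k)) t = inl k`.
  have key : ∀ k : ↥K,
      (HNNExtension.t : G)⁻¹ * HNNExtension.of (Coprod.inr (ξ k)) * HNNExtension.t =
        HNNExtension.of (Coprod.inl (k : A)) := by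
    intro k
    have h := HNNExtension.equiv_eq_conj (φ := φ)
      ⟨Coprod.inl (k : A), Subgroup.mem_map.2 ⟨(k : A), k.2, rfl⟩⟩
    rw [hφ k] at h
    rw [h]; group
  -- The homomorphism `A ∗ B →* G` sending `a ↦ a`, `b ↦ t⁻¹ b t`.
  let f : (A ∗ B) →* G := Coprod.lift (HNNExtension.of.comp Coprod.inl)
    (((MulAut.conj ((HNNExtension.t : G)⁻¹)).toMonoidHom.comp HNNExtension.of).comp Coprod.inr)
  have hf_inl : ∀ a : A, f (Coprod.inl a) = HNNExtension.of (Coprod.inl a) := by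
    intro a; simp [f]
  have hf_inr : ∀ b : B, f (Coprod.inr b) =
      (HNNExtension.t : G)⁻¹ * HNNExtension.of (Coprod.inr b) * HNNExtension.t := by
    intro b; simp [f, MulAut.conj]
  have hfker : N ≤ f.ker := by
    rw [hN]
    apply (Subgroup.normalClosure_le_normal)
    rintro x ⟨k, rfl⟩
    simp only [SetLike.mem_coe, MonoidHom.mem_ker, map_mul, map_inv, hf_inl, hf_inr, key k]
    group
  -- `ψ : P →* G` where `P` is the amalgamated product.
  let ψ : (A ∗ B) ⧸ N →* G := QuotientGroup.lift N f hfker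
  have hψ : ∀ x : A ∗ B, ψ (QuotientGroup.mk x) = f x := fun x => rfl
  -- `π : G →* P` sending `t ↦ 1`.
  have hπcond : ∀ a : ↥(K.map (Coprod.inl : A →* A ∗ B)),
      (1 : (A ∗ B) ⧸ N) * (QuotientGroup.mk' N) (a : A ∗ B) =
        (QuotientGroup.mk' N) ((φ a : A ∗ B)) * 1 := by
    rintro ⟨x, hx⟩
    obtain ⟨k, hk, rfl⟩ := Subgroup.mem_map.1 hx
    have ha : (⟨Coprod.inl k, hx⟩ : ↥(K.map (Coprod.inl : A →* A ∗ B))) =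
        ⟨Coprod.inl ((⟨k, hk⟩ : ↥K) : A),
          Subgroup.mem_map.2 ⟨((⟨k, hk⟩ : ↥K) : A), (⟨k, hk⟩ : ↥K).2, rfl⟩⟩ := rfl
    rw [ha, hφ ⟨k, hk⟩]
    simp only [one_mul, mul_one, QuotientGroup.mk'_apply]
    refine (QuotientGroup.eq).2 ?_
    apply Subgroup.subset_normalClosure
    exact ⟨⟨k, hk⟩, rfl⟩
  let π : G →* (A ∗ B) ⧸ N := HNNExtension.lift (QuotientGroup.mk' N) 1 hπcond
  have hπ_of : ∀ x : A ∗ B, π (HNNExtension.of x) = QuotientGroup.mk x := by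
    intro x
    rw [show π (HNNExtension.of x) = (QuotientGroup.mk' N) x from
      HNNExtension.lift_of _ _ _ x]
    rfl
  have hπ_t : π HNNExtension.t = 1 := HNNExtension.lift_t _ _ _
  -- π ∘ ψ = id
  have hπψ : ∀ y : (A ∗ B) ⧸ N, π (ψ y) = y := by
    intro y
    refine QuotientGroup.induction_on y ?_
    intro x
    rw [hψ]
    refine Coprod.induction_on x ?_ ?_ ?_
    · intro a; rw [hf_inl, hπ_of]
    · intro b
      rw [hf_inr]
      simp only [map_mul, map_inv, hπ_t, hπ_of]
      group
    · intro x y hx hy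
      rw [map_mul, map_mul, hx, hy]
      rfl
  have hψinj : Function.Injective ψ := Function.LeftInverse.injective hπψ
  -- range of ψ is S
  have hSgen1 : ∀ a : A, HNNExtension.of (Coprod.inl a) ∈ S :=
    fun a => Subgroup.subset_closure (Or.inl ⟨a, rfl⟩)
  have hSgen2 : ∀ b : B,
      (HNNExtension.t : G)⁻¹ * HNNExtension.of (Coprod.inr b) * HNNExtension.t ∈ S :=
    fun b => Subgroup.subset_closure (Or.inr ⟨b, rfl⟩)
  have hψrange : ψ.range = S := by
    apply le_antisymm
    · rintro _ ⟨y, rfl⟩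
      refine QuotientGroup.induction_on y ?_
      intro x
      rw [hψ]
      refine Coprod.induction_on x ?_ ?_ ?_
      · intro a; rw [hf_inl]; exact hSgen1 a
      · intro b; rw [hf_inr]; exact hSgen2 b
      · intro x y hx hy; rw [map_mul]; exact mul_mem hx hy
    · rw [Subgroup.closure_le]
      rintro _ (⟨a, rfl⟩ | ⟨b, rfl⟩)
      · exact ⟨QuotientGroup.mk (Coprod.inl a), by rw [hψ, hf_inl]⟩
      · exact ⟨QuotientGroup.mk (Coprod.inr b), by rw [hψ, hf_inr]⟩
  have hfix : ∀ s ∈ S, (ψ.comp π) s = s := by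
    intro s hs
    refine Subgroup.closure_induction ?_ ?_ ?_ ?_ hs
    · rintro _ (⟨a, rfl⟩ | ⟨b, rfl⟩)
      · simp only [MonoidHom.comp_apply, hπ_of, hψ, hf_inl]
      · simp only [MonoidHom.comp_apply, map_mul, map_inv, hπ_t, hπ_of, inv_one, one_mul,
          mul_one, map_one, hψ, hf_inr]
    · simp
    · intro x y _ _ hx hy; rw [map_mul, hx, hy]
    · intro x _ hx; rw [map_inv, hx]
  constructor
  · -- the retraction
    refine ⟨ψ.comp π, hfix, ?_⟩
    apply le_antisymm
    · rintro _ ⟨y, rfl⟩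
      rw [← hψrange]
      exact ⟨π y, rfl⟩
    · intro s hs
      exact ⟨s, hfix s hs⟩
  · -- the isomorphism
    exact ⟨(MulEquiv.subgroupCongr hψrange.symm).trans (MonoidHom.ofInjective hψinj).symm⟩
end
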